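/- arXiv:2003.09174 — 3 statements merged into one kernel-verified Lean document; each statement's English description precedes it below -/
import Mathlib

section
/- Let f be twice differentiable with positive definite Hessian, strongly self-concordant with constant M. Consider one quasi-Newton step x⁺ = x - G⁻¹∇f(x) where G is symmetric positive definite; set u = x⁺ - x, r = ‖u‖_x, J = ∫₀¹∇²f(x+tu)dt. Then λ_f(x⁺) ≤ (1 + Mr/2)·θ(J,G,u)·λ_f(x), where λ_f(z) = (∇f(z)ᵀ∇²f(z)⁻¹∇f(z))^{1/2} and θ(J,G,u) = [uᵀ(G-J)J⁻¹(G-J)u/(uᵀGJ⁻¹Gu)]^{1/2}. -/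
/-!
Since `G u = -∇f(x)`, Taylor's formula gives `∇f(x⁺) = ∇f(x) + J u = -(G - J) u`.
Strong self-concordance compares the Hessian at `x + t u` with the Hessians at the endpoints up to
the factors `1 + M t r` and `1 + M (1 - t) r`; averaging over `t` gives
`J ⪯ (1 + M r / 2) ∇²f(x⁺)` and `∇²f(x) ⪯ (1 + M r / 2) J`, and inversion reverses both. Hence
`λ_f(x⁺)² ≤ (1 + M r / 2) ‖(G - J) u‖²_{J⁻¹} = (1 + M r / 2) θ² ‖G u‖²_{J⁻¹}
  ≤ (1 + M r / 2)² θ² λ_f(x)²`.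
-/

open Matrix

noncomputable def DFPupd {n : ℕ} (A G : Matrix (Fin n) (Fin n) ℝ) (u : Fin n → ℝ) :
    Matrix (Fin n) (Fin n) ℝ :=
  G - ((u ⬝ᵥ A.mulVec u)⁻¹) •
      (vecMulVec (A.mulVec u) (G.mulVec u) + vecMulVec (G.mulVec u) (A.mulVec u))
    + (((u ⬝ᵥ G.mulVec u) / (u ⬝ᵥ A.mulVec u) + 1) * (u ⬝ᵥ A.mulVec u)⁻¹) •
      vecMulVec (A.mulVec u) (A.mulVec u)

noncomputable def BFGSupd {n : ℕ} (A G : Matrix (Fin n) (Fin n) ℝ) (u : Fin n → ℝ) :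
    Matrix (Fin n) (Fin n) ℝ :=
  G - ((u ⬝ᵥ G.mulVec u)⁻¹) • vecMulVec (G.mulVec u) (G.mulVec u)
    + ((u ⬝ᵥ A.mulVec u)⁻¹) • vecMulVec (A.mulVec u) (A.mulVec u)

noncomputable def Broyd {n : ℕ} (φ : ℝ) (A G : Matrix (Fin n) (Fin n) ℝ) (u : Fin n → ℝ) :
    Matrix (Fin n) (Fin n) ℝ :=
  if u = 0 then G else φ • DFPupd A G u + (1 - φ) • BFGSupd A G u

/-- Closeness measure θ(A, G, u). -/
noncomputable def theta {n : ℕ} (A G : Matrix (Fin n) (Fin n) ℝ) (u : Fin n → ℝ) : ℝ :=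
  if u = 0 then 0 else
    Real.sqrt ((u ⬝ᵥ ((G - A) * A⁻¹ * (G - A)).mulVec u) /
      (u ⬝ᵥ (G * A⁻¹ * G).mulVec u))

/-- Trace potential σ(A, G). -/
noncomputable def sigmaPot {n : ℕ} (A G : Matrix (Fin n) (Fin n) ℝ) : ℝ :=
  (A⁻¹ * (G - A)).trace

/-- Byrd–Nocedal potential ψ(A, G). -/
noncomputable def psiPot {n : ℕ} (A G : Matrix (Fin n) (Fin n) ℝ) : ℝ :=
  (A⁻¹ * (G - A)).trace - Real.log (A⁻¹ * G).det

noncomputable def omegaFn (t : ℝ) : ℝ := t - Real.log (1 + t)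

/-- Gradient of f as a vector. -/
noncomputable def gradV {n : ℕ} (f : (Fin n → ℝ) → ℝ) (x : Fin n → ℝ) : Fin n → ℝ :=
  fun i => fderiv ℝ f x (Pi.single i 1)

/-- Hessian of f as a matrix. -/
noncomputable def hessM {n : ℕ} (f : (Fin n → ℝ) → ℝ) (x : Fin n → ℝ) :
    Matrix (Fin n) (Fin n) ℝ :=
  Matrix.of fun i j =>
    fderiv ℝ (fun y => fderiv ℝ f y (Pi.single j 1)) x (Pi.single i 1)

/-- Averaged Hessian of f along the segment from x to y. -/
noncomputable def avgHess {n : ℕ} (f : (Fin n → ℝ) → ℝ) (x y : Fin n → ℝ) :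
    Matrix (Fin n) (Fin n) ℝ :=
  Matrix.of fun i j => ∫ t in (0 : ℝ)..1, hessM f (x + t • (y - x)) i j

/-- Strong self-concordance of f with constant M. -/
def StronglySelfConcordant {n : ℕ} (f : (Fin n → ℝ) → ℝ) (M : ℝ) : Prop :=
  ∀ x y z w : Fin n → ℝ,
    ((M * Real.sqrt ((y - x) ⬝ᵥ (hessM f z).mulVec (y - x))) • hessM f w -
      (hessM f y - hessM f x)).PosSemidef

/-- Local gradient norm λ_f(x) = ‖∇f(x)‖ₓ*. -/
noncomputable def lamF {n : ℕ} (f : (Fin n → ℝ) → ℝ) (x : Fin n → ℝ) : ℝ :=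
  Real.sqrt (gradV f x ⬝ᵥ (hessM f x)⁻¹.mulVec (gradV f x))

namespace Matrix

variable {ι : Type*} [Fintype ι] {A B S : Matrix ι ι ℝ}

lemma IsHermitian.dotProduct_mulVec_comm (hA : A.IsHermitian) (v w : ι → ℝ) :
    v ⬝ᵥ A *ᵥ w = A *ᵥ v ⬝ᵥ w := by
  rw [dotProduct_mulVec, ← mulVec_transpose, ← conjTranspose_eq_transpose_of_trivial, hA]

lemma neg_dotProduct_mulVec_neg (A : Matrix ι ι ℝ) (v : ι → ℝ) :
    -v ⬝ᵥ A *ᵥ -v = v ⬝ᵥ A *ᵥ v := by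
  rw [mulVec_neg, neg_dotProduct_neg]

lemma IsHermitian.dotProduct_mul_mul_self_mulVec (hS : S.IsHermitian) (A : Matrix ι ι ℝ)
    (v : ι → ℝ) : v ⬝ᵥ (S * A * S) *ᵥ v = S *ᵥ v ⬝ᵥ A *ᵥ (S *ᵥ v) := by
  rw [← mulVec_mulVec, ← mulVec_mulVec, hS.dotProduct_mulVec_comm]

lemma sqrt_smul_dotProduct_mulVec_smul (A : Matrix ι ι ℝ) (a : ℝ) (u : ι → ℝ) :
    √((a • u) ⬝ᵥ A *ᵥ (a • u)) = |a| * √(u ⬝ᵥ A *ᵥ u) := by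
  rw [mulVec_smul, dotProduct_smul, smul_dotProduct, smul_eq_mul, smul_eq_mul, ← mul_assoc, ← sq,
    Real.sqrt_mul (sq_nonneg a), Real.sqrt_sq_eq_abs]

lemma PosDef.of_dotProduct_mulVec_le (hA : A.PosDef) (hB : B.IsHermitian) {c : ℝ} (hc : 0 ≤ c)
    (hAB : ∀ v, v ⬝ᵥ A *ᵥ v ≤ c * (v ⬝ᵥ B *ᵥ v)) : B.PosDef :=
  .of_dotProduct_mulVec_pos hB fun v hv =>
    pos_of_mul_pos_right ((hA.dotProduct_mulVec_pos hv).trans_le (hAB v)) hc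

open intervalIntegral in
lemma dotProduct_of_intervalIntegral_mulVec {A : ℝ → Matrix ι ι ℝ} {a b : ℝ}
    (hA : ∀ i j, IntervalIntegrable (fun t => A t i j) MeasureTheory.volume a b) (v w : ι → ℝ) :
    v ⬝ᵥ of (fun i j => ∫ t in a..b, A t i j) *ᵥ w = ∫ t in a..b, v ⬝ᵥ A t *ᵥ w := by
  have hint : ∀ i j, IntervalIntegrable (fun t => v i * (A t i j * w j)) MeasureTheory.volume a b :=
    fun i j => ((hA i j).mul_const _).const_mul _
  have hint_sum : ∀ i, IntervalIntegrable (fun t => ∑ j, v i * (A t i j * w j))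
      MeasureTheory.volume a b := fun i => by
    simpa only [Finset.sum_fn] using IntervalIntegrable.sum Finset.univ fun j _ => hint i j
  simp only [dotProduct, mulVec, of_apply, Finset.mul_sum]
  rw [integral_finsetSum fun i _ => hint_sum i]
  refine Finset.sum_congr rfl fun i _ => ?_
  rw [integral_finsetSum fun j _ => hint i j]
  refine Finset.sum_congr rfl fun j _ => ?_
  rw [integral_const_mul, integral_mul_const]

variable [DecidableEq ι]

lemma PosDef.mulVec_inv_mulVec (hA : A.PosDef) (v : ι → ℝ) : A *ᵥ (A⁻¹ *ᵥ v) = v := by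
  rw [mulVec_mulVec, mul_nonsing_inv _ ((isUnit_iff_isUnit_det A).mp hA.isUnit), one_mulVec]

lemma PosDef.dotProduct_inv_mulVec_le (hA : A.PosDef) (hB : B.PosDef) {c : ℝ} (hc : 0 < c)
    (hAB : ∀ v, v ⬝ᵥ A *ᵥ v ≤ c * (v ⬝ᵥ B *ᵥ v)) (x : ι → ℝ) :
    x ⬝ᵥ B⁻¹ *ᵥ x ≤ c * (x ⬝ᵥ A⁻¹ *ᵥ x) := by
  set y := B⁻¹ *ᵥ x
  set p := A⁻¹ *ᵥ x
  have hBy : y ⬝ᵥ B *ᵥ y = x ⬝ᵥ y := by rw [hB.mulVec_inv_mulVec, dotProduct_comm]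
  have hAp : A *ᵥ p = x := hA.mulVec_inv_mulVec x
  -- expand `0 ≤ (c p - y)ᵀ A (c p - y)` and bound `yᵀ A y ≤ c yᵀ B y = c xᵀ y`
  have hexpand : (c • p - y) ⬝ᵥ A *ᵥ (c • p - y) =
      c ^ 2 * (x ⬝ᵥ p) - 2 * c * (x ⬝ᵥ y) + y ⬝ᵥ A *ᵥ y := by
    have hpy : p ⬝ᵥ A *ᵥ y = x ⬝ᵥ y := by rw [hA.1.dotProduct_mulVec_comm, hAp]
    simp only [mulVec_sub, mulVec_smul, hAp, dotProduct_sub, sub_dotProduct, dotProduct_smul,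
      smul_dotProduct, hpy, smul_eq_mul, dotProduct_comm y x, dotProduct_comm p x]
    ring
  have hnonneg : 0 ≤ (c • p - y) ⬝ᵥ A *ᵥ (c • p - y) :=
    hA.posSemidef.dotProduct_mulVec_nonneg _
  nlinarith [hAB y]

end Matrix

section Theta

variable {n : ℕ}

lemma theta_nonneg (A G : Matrix (Fin n) (Fin n) ℝ) (u : Fin n → ℝ) : 0 ≤ theta A G u := by
  unfold theta
  split_ifs <;> positivity

lemma theta_sq_mul {A G : Matrix (Fin n) (Fin n) ℝ} (hA : A.PosDef) (hG : G.PosDef)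
    (u : Fin n → ℝ) :
    theta A G u ^ 2 * (G *ᵥ u ⬝ᵥ A⁻¹ *ᵥ (G *ᵥ u)) =
      (G - A) *ᵥ u ⬝ᵥ A⁻¹ *ᵥ ((G - A) *ᵥ u) := by
  by_cases hu : u = 0
  · simp [theta, hu]
  have hGu : G *ᵥ u ≠ 0 := fun h => (hG.dotProduct_mulVec_pos hu).ne' (by simp [h])
  have hden : 0 < G *ᵥ u ⬝ᵥ A⁻¹ *ᵥ (G *ᵥ u) := hA.inv.dotProduct_mulVec_pos hGu
  have hnum : 0 ≤ (G - A) *ᵥ u ⬝ᵥ A⁻¹ *ᵥ ((G - A) *ᵥ u) :=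
    hA.inv.posSemidef.dotProduct_mulVec_nonneg _
  rw [theta, if_neg hu, hG.1.dotProduct_mul_mul_self_mulVec,
    (hG.1.sub hA.1).dotProduct_mul_mul_self_mulVec, Real.sq_sqrt (div_nonneg hnum hden.le),
    div_mul_cancel₀ _ hden.ne']

lemma dotProduct_inv_mulVec_le_theta {H₀ H₁ J G : Matrix (Fin n) (Fin n) ℝ}
    (hH₀ : H₀.PosDef) (hH₁ : H₁.PosDef) (hJ : J.PosDef) (hG : G.PosDef) {c : ℝ} (hc : 0 < c)
    (hJH₁ : ∀ v, v ⬝ᵥ J *ᵥ v ≤ c * (v ⬝ᵥ H₁ *ᵥ v))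
    (hH₀J : ∀ v, v ⬝ᵥ H₀ *ᵥ v ≤ c * (v ⬝ᵥ J *ᵥ v)) (u : Fin n → ℝ) :
    (G - J) *ᵥ u ⬝ᵥ H₁⁻¹ *ᵥ ((G - J) *ᵥ u) ≤
      (c * theta J G u) ^ 2 * (G *ᵥ u ⬝ᵥ H₀⁻¹ *ᵥ (G *ᵥ u)) :=
  calc (G - J) *ᵥ u ⬝ᵥ H₁⁻¹ *ᵥ ((G - J) *ᵥ u)
      ≤ c * ((G - J) *ᵥ u ⬝ᵥ J⁻¹ *ᵥ ((G - J) *ᵥ u)) := hJ.dotProduct_inv_mulVec_le hH₁ hc hJH₁ _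
    _ = c * (theta J G u ^ 2 * (G *ᵥ u ⬝ᵥ J⁻¹ *ᵥ (G *ᵥ u))) := by rw [theta_sq_mul hJ hG]
    _ ≤ c * (theta J G u ^ 2 * (c * (G *ᵥ u ⬝ᵥ H₀⁻¹ *ᵥ (G *ᵥ u)))) := by
        gcongr
        exact hH₀.dotProduct_inv_mulVec_le hJ hc hH₀J _
    _ = (c * theta J G u) ^ 2 * (G *ᵥ u ⬝ᵥ H₀⁻¹ *ᵥ (G *ᵥ u)) := by ring

end Theta

lemma integral_one_add_one_sub_mul (s : ℝ) :
    ∫ t in (0 : ℝ)..1, (1 + (1 - t) * s) = 1 + s / 2 := by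
  rw [intervalIntegral.integral_add intervalIntegrable_const
    (Continuous.intervalIntegrable (by fun_prop) _ _)]
  norm_num [intervalIntegral.integral_mul_const, intervalIntegral.integral_comp_sub_left fun t => t]
  ring

section Calculus

variable {n : ℕ} {f : (Fin n → ℝ) → ℝ}

lemma contDiff_one_fderiv (hf : ContDiff ℝ 2 f) : ContDiff ℝ 1 (fderiv ℝ f) :=
  hf.fderiv_right (by norm_num)

lemma continuous_fderiv_fderiv (hf : ContDiff ℝ 2 f) : Continuous (fderiv ℝ (fderiv ℝ f)) :=
  (contDiff_one_fderiv hf).continuous_fderiv one_ne_zero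

lemma hessM_eq_toMatrix₂' (hf : ContDiff ℝ 2 f) (z : Fin n → ℝ) :
    hessM f z = LinearMap.toMatrix₂' ℝ (fderiv ℝ (fderiv ℝ f) z).toLinearMap₁₂ := by
  ext i j
  have hdiff : DifferentiableAt ℝ (fderiv ℝ f) z :=
    ((contDiff_one_fderiv hf).differentiable one_ne_zero).differentiableAt
  rw [hessM, of_apply, fderiv_clm_apply hdiff (differentiableAt_const _),
    LinearMap.toMatrix₂'_apply]
  simp

lemma dotProduct_hessM_mulVec (hf : ContDiff ℝ 2 f) (z v w : Fin n → ℝ) :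
    v ⬝ᵥ hessM f z *ᵥ w = fderiv ℝ (fderiv ℝ f) z v w := by
  rw [hessM_eq_toMatrix₂' hf, ← Matrix.toLinearMap₂'_apply', Matrix.toLinearMap₂'_toMatrix']
  rfl

lemma continuous_dotProduct_hessM_mulVec (hf : ContDiff ℝ 2 f) (v w : Fin n → ℝ) :
    Continuous fun z => v ⬝ᵥ hessM f z *ᵥ w := by
  simp only [dotProduct_hessM_mulVec hf]
  exact (continuous_fderiv_fderiv hf).clm_apply continuous_const |>.clm_apply continuous_const

lemma continuous_hessM_apply (hf : ContDiff ℝ 2 f) (i j : Fin n) :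
    Continuous fun z => hessM f z i j := by
  simpa only [single_one_dotProduct, mulVec_single_one, col_apply] using
    continuous_dotProduct_hessM_mulVec hf (Pi.single i 1) (Pi.single j 1)

lemma dotProduct_avgHess_mulVec (hf : ContDiff ℝ 2 f) (x y v w : Fin n → ℝ) :
    v ⬝ᵥ avgHess f x y *ᵥ w = ∫ t in (0 : ℝ)..1, v ⬝ᵥ hessM f (x + t • (y - x)) *ᵥ w :=
  dotProduct_of_intervalIntegral_mulVec (fun i j =>
    ((continuous_hessM_apply hf i j).comp (by fun_prop)).intervalIntegrable 0 1) v w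

lemma avgHess_isHermitian (hH : ∀ z, (hessM f z).IsHermitian) (x y : Fin n → ℝ) :
    (avgHess f x y).IsHermitian := by
  ext i j
  simp only [avgHess, conjTranspose_apply, of_apply, star_trivial]
  congr 1 with t
  exact congrFun (congrFun (hH _) i) j

lemma hasDerivAt_fderiv_add_smul_apply (hf : ContDiff ℝ 2 f) (x u v : Fin n → ℝ) (t : ℝ) :
    HasDerivAt (fun s : ℝ => fderiv ℝ f (x + s • u) v)
      (fderiv ℝ (fderiv ℝ f) (x + t • u) u v) t := by
  have hline : HasDerivAt (fun s : ℝ => x + s • u) u t := by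
    simpa using ((hasDerivAt_id t).smul_const u).const_add x
  have hdf : HasFDerivAt (fderiv ℝ f) (fderiv ℝ (fderiv ℝ f) (x + t • u)) (x + t • u) :=
    ((contDiff_one_fderiv hf).differentiable one_ne_zero _).hasFDerivAt
  have hcomp : HasDerivAt (fun s : ℝ => fderiv ℝ f (x + s • u))
      (fderiv ℝ (fderiv ℝ f) (x + t • u) u) t := hdf.comp_hasDerivAt t hline
  simpa using hcomp.clm_apply (hasDerivAt_const t v)

lemma gradV_add (hf : ContDiff ℝ 2 f) (x u : Fin n → ℝ) :
    gradV f (x + u) = gradV f x + avgHess f x (x + u) *ᵥ u := by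
  funext i
  have hsymm : ∀ z v w, fderiv ℝ (fderiv ℝ f) z v w = fderiv ℝ (fderiv ℝ f) z w v :=
    fun z => hf.contDiffAt.isSymmSndFDerivAt (by simp)
  have hftc := intervalIntegral.integral_eq_sub_of_hasDerivAt
    (fun t _ => hasDerivAt_fderiv_add_smul_apply hf x u (Pi.single i 1) t)
    (((continuous_fderiv_fderiv hf).comp (by fun_prop : Continuous fun t : ℝ => x + t • u)
      |>.clm_apply continuous_const |>.clm_apply continuous_const).intervalIntegrable 0 1)
  have hJu : (avgHess f x (x + u) *ᵥ u) i =
      ∫ t in (0 : ℝ)..1, fderiv ℝ (fderiv ℝ f) (x + t • u) u (Pi.single i 1) := by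
    rw [← single_one_dotProduct i (avgHess f x (x + u) *ᵥ u), dotProduct_avgHess_mulVec hf,
      add_sub_cancel_left]
    simp only [dotProduct_hessM_mulVec hf, hsymm _ (Pi.single i 1)]
  rw [Pi.add_apply, hJu, hftc]
  simp [gradV]

end Calculus

section SelfConcordance

variable {n : ℕ} {f : (Fin n → ℝ) → ℝ} {M : ℝ}

lemma StronglySelfConcordant.dotProduct_hessM_mulVec_sub_le (hssc : StronglySelfConcordant f M)
    (x u w v : Fin n → ℝ) (a b : ℝ) :
    v ⬝ᵥ hessM f (x + a • u) *ᵥ v - v ⬝ᵥ hessM f (x + b • u) *ᵥ v ≤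
      M * (|a - b| * √(u ⬝ᵥ hessM f x *ᵥ u)) * (v ⬝ᵥ hessM f w *ᵥ v) := by
  have h := (hssc (x + b • u) (x + a • u) x w).dotProduct_mulVec_nonneg v
  rw [show x + a • u - (x + b • u) = (a - b) • u by module,
    sqrt_smul_dotProduct_mulVec_smul] at h
  simp only [star_trivial, sub_mulVec, smul_mulVec, dotProduct_sub, dotProduct_smul,
    smul_eq_mul] at h
  linarith

lemma StronglySelfConcordant.dotProduct_hessM_segment_le_right (hssc : StronglySelfConcordant f M)
    (x u v : Fin n → ℝ) {t : ℝ} (ht : t ≤ 1) :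
    v ⬝ᵥ hessM f (x + t • u) *ᵥ v ≤
      (1 + (1 - t) * (M * √(u ⬝ᵥ hessM f x *ᵥ u))) * (v ⬝ᵥ hessM f (x + u) *ᵥ v) := by
  have h := hssc.dotProduct_hessM_mulVec_sub_le x u (x + u) v t 1
  rw [one_smul, abs_of_nonpos (by linarith)] at h
  linarith

/-- The weight `1 + (1 - t) s` makes this bound integrate like the previous one, and
`(1 + t s)(1 + (1 - t) s) ≤ (1 + s / 2)²` by AM-GM. -/
lemma StronglySelfConcordant.dotProduct_hessM_left_le_segment
    (hssc : StronglySelfConcordant f M) (hpos : ∀ z, (hessM f z).PosDef) (hM : 0 ≤ M)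
    (x u v : Fin n → ℝ) {t : ℝ} (ht : t ∈ Set.Icc (0 : ℝ) 1) :
    (1 + (1 - t) * (M * √(u ⬝ᵥ hessM f x *ᵥ u))) * (v ⬝ᵥ hessM f x *ᵥ v) ≤
      (1 + M * √(u ⬝ᵥ hessM f x *ᵥ u) / 2) ^ 2 * (v ⬝ᵥ hessM f (x + t • u) *ᵥ v) := by
  set s := M * √(u ⬝ᵥ hessM f x *ᵥ u)
  have hs : 0 ≤ s := mul_nonneg hM (Real.sqrt_nonneg _)
  have hg : 0 ≤ v ⬝ᵥ hessM f (x + t • u) *ᵥ v := (hpos _).posSemidef.dotProduct_mulVec_nonneg v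
  have h := hssc.dotProduct_hessM_mulVec_sub_le x u (x + t • u) v 0 t
  rw [zero_smul, add_zero, zero_sub, abs_neg, abs_of_nonneg ht.1] at h
  have hweight : 0 ≤ 1 + (1 - t) * s := by nlinarith [ht.2]
  nlinarith [mul_le_mul_of_nonneg_left h hweight, mul_nonneg (sq_nonneg (s * (t - 1 / 2))) hg]

lemma dotProduct_avgHess_mulVec_le (hf : ContDiff ℝ 2 f) (hssc : StronglySelfConcordant f M)
    (x u v : Fin n → ℝ) :
    v ⬝ᵥ avgHess f x (x + u) *ᵥ v ≤
      (1 + M * √(u ⬝ᵥ hessM f x *ᵥ u) / 2) * (v ⬝ᵥ hessM f (x + u) *ᵥ v) := by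
  rw [dotProduct_avgHess_mulVec hf, add_sub_cancel_left, ← integral_one_add_one_sub_mul,
    ← intervalIntegral.integral_mul_const]
  exact intervalIntegral.integral_mono_on zero_le_one
    (((continuous_dotProduct_hessM_mulVec hf v v).comp (by fun_prop)).intervalIntegrable 0 1)
    (Continuous.intervalIntegrable (by fun_prop) 0 1)
    fun t ht => hssc.dotProduct_hessM_segment_le_right x u v ht.2

lemma dotProduct_hessM_mulVec_le_avgHess (hf : ContDiff ℝ 2 f) (hpos : ∀ z, (hessM f z).PosDef)
    (hM : 0 ≤ M) (hssc : StronglySelfConcordant f M) (x u v : Fin n → ℝ) :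
    v ⬝ᵥ hessM f x *ᵥ v ≤
      (1 + M * √(u ⬝ᵥ hessM f x *ᵥ u) / 2) * (v ⬝ᵥ avgHess f x (x + u) *ᵥ v) := by
  set c := 1 + M * √(u ⬝ᵥ hessM f x *ᵥ u) / 2
  have hc : 0 < c := by positivity
  refine le_of_mul_le_mul_left ?_ hc
  calc c * (v ⬝ᵥ hessM f x *ᵥ v)
      = ∫ t in (0 : ℝ)..1,
          (1 + (1 - t) * (M * √(u ⬝ᵥ hessM f x *ᵥ u))) * (v ⬝ᵥ hessM f x *ᵥ v) := by
        rw [intervalIntegral.integral_mul_const, integral_one_add_one_sub_mul]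
    _ ≤ ∫ t in (0 : ℝ)..1, c ^ 2 * (v ⬝ᵥ hessM f (x + t • u) *ᵥ v) :=
        intervalIntegral.integral_mono_on zero_le_one
          (Continuous.intervalIntegrable (by fun_prop) 0 1)
          ((((continuous_dotProduct_hessM_mulVec hf v v).comp (by fun_prop)).const_mul _
            ).intervalIntegrable 0 1)
          fun t ht => hssc.dotProduct_hessM_left_le_segment hpos hM x u v ht
    _ = c * (c * (v ⬝ᵥ avgHess f x (x + u) *ᵥ v)) := by
        rw [intervalIntegral.integral_const_mul, dotProduct_avgHess_mulVec hf, add_sub_cancel_left]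
        ring

end SelfConcordance

lemma lamF_sq {n : ℕ} {f : (Fin n → ℝ) → ℝ} {x : Fin n → ℝ} (hx : (hessM f x).PosDef) :
    lamF f x ^ 2 = gradV f x ⬝ᵥ (hessM f x)⁻¹ *ᵥ gradV f x :=
  Real.sq_sqrt (hx.inv.posSemidef.dotProduct_mulVec_nonneg _)

theorem one_step_progress_general {n : ℕ} (f : (Fin n → ℝ) → ℝ)
    (hf : ContDiff ℝ 2 f) (hpos : ∀ x, (hessM f x).PosDef)
    (M : ℝ) (hM : 0 ≤ M) (hssc : StronglySelfConcordant f M)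
    (x : Fin n → ℝ) (G : Matrix (Fin n) (Fin n) ℝ) (hG : G.PosDef) :
    let u := -(G⁻¹.mulVec (gradV f x))
    let xp := x + u
    let r := Real.sqrt (u ⬝ᵥ (hessM f x).mulVec u)
    let J := avgHess f x xp
    lamF f xp ≤ (1 + M * r / 2) * theta J G u * lamF f x := by
  intro u xp r J
  have hc : 0 < 1 + M * r / 2 := by positivity
  have hJxp := dotProduct_avgHess_mulVec_le hf hssc x u
  have hxJ := dotProduct_hessM_mulVec_le_avgHess hf hpos hM hssc x u
  have hJ : J.PosDef :=
    (hpos x).of_dotProduct_mulVec_le (avgHess_isHermitian (fun z => (hpos z).1) x xp) hc.le hxJ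
  have hGu : G *ᵥ u = -gradV f x := by rw [mulVec_neg, hG.mulVec_inv_mulVec]
  have hgrad : gradV f xp = -((G - J) *ᵥ u) := by
    rw [show gradV f xp = gradV f x + J *ᵥ u from gradV_add hf x u, sub_mulVec, hGu]
    abel
  refine Real.sqrt_le_iff.mpr
    ⟨mul_nonneg (mul_nonneg hc.le (theta_nonneg J G u)) (Real.sqrt_nonneg _), ?_⟩
  calc gradV f xp ⬝ᵥ (hessM f xp)⁻¹ *ᵥ gradV f xp
      = (G - J) *ᵥ u ⬝ᵥ (hessM f xp)⁻¹ *ᵥ ((G - J) *ᵥ u) := by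
        rw [hgrad, neg_dotProduct_mulVec_neg]
    _ ≤ ((1 + M * r / 2) * theta J G u) ^ 2 * (G *ᵥ u ⬝ᵥ (hessM f x)⁻¹ *ᵥ (G *ᵥ u)) :=
        dotProduct_inv_mulVec_le_theta (hpos x) (hpos xp) hJ hG hc hJxp hxJ u
    _ = ((1 + M * r / 2) * theta J G u * lamF f x) ^ 2 := by
        rw [hGu, neg_dotProduct_mulVec_neg, mul_pow _ (lamF f x), lamF_sq (hpos x)]
end

section
/- If G, J are symmetric positive definite with (1/ξ')J ⪯ G ⪯ ξ'(L/μ)J for ξ' ≥ 1 and 0 < μ ≤ L, then θ(J,G,u) ≤ max{1 - μ/(ξ'L), ξ' - 1} for every u, where θ(J,G,u) = [uᵀ(G-J)J⁻¹(G-J)u/(uᵀGJ⁻¹Gu)]^{1/2}. -/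
open Matrix

/-
Write `J = R²` with `R = √J` and `M = R⁻¹ G R⁻¹`, so that `G - J = R (M - 1) R` and
`G J⁻¹ G = R M² R`. The hypotheses say that the spectrum of `M` lies in `[ξ'⁻¹, ξ' L / μ]`,
on which `|x - 1| ≤ ρ x` with `ρ = max (1 - μ / (ξ' L)) (ξ' - 1)`. The functional calculus
turns this into `(M - 1)² ≤ ρ² M²`, and conjugating back by `R` gives
`(G - J) J⁻¹ (G - J) ≤ ρ² G J⁻¹ G`, which bounds the quotient under the square root in `θ`
by `ρ²`.
-/

open scoped MatrixOrder ComplexOrder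

theorem sub_one_sq_le_max_sq_mul_sq {a b x : ℝ} (ha : 0 < a) (hax : a ≤ x) (hxb : x ≤ b) :
    (x - 1) ^ 2 ≤ max (1 - b⁻¹) (a⁻¹ - 1) ^ 2 * x ^ 2 := by
  have hx : 0 < x := ha.trans_le hax
  have hb : 0 < b := hx.trans_le hxb
  have h_inv_a : 1 ≤ a⁻¹ * x := by rwa [le_inv_mul_iff₀ ha, mul_one]
  have h_inv_b : b⁻¹ * x ≤ 1 := by rwa [inv_mul_le_iff₀ hb, mul_one]
  rw [← mul_pow]
  apply sq_le_sq'
  · nlinarith [mul_le_mul_of_nonneg_right (le_max_right (1 - b⁻¹) (a⁻¹ - 1)) hx.le]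
  · nlinarith [mul_le_mul_of_nonneg_right (le_max_left (1 - b⁻¹) (a⁻¹ - 1)) hx.le]

section FunctionalCalculus

variable {A : Type*} [TopologicalSpace A] [Ring A] [StarRing A] [PartialOrder A]
  [StarOrderedRing A] [Algebra ℝ A] [StarModule ℝ A]
  [ContinuousFunctionalCalculus ℝ A IsSelfAdjoint] [NonnegSpectrumClass ℝ A]

theorem sub_one_sq_le_max_sq_smul_sq {a b : ℝ} {M : A} (ha : 0 < a)
    (hlow : algebraMap ℝ A a ≤ M) (hup : M ≤ algebraMap ℝ A b) :
    (M - 1) ^ 2 ≤ max (1 - b⁻¹) (a⁻¹ - 1) ^ 2 • M ^ 2 := by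
  have hM : IsSelfAdjoint M := by
    simpa using (IsSelfAdjoint.of_nonneg (sub_nonneg.2 hlow)).add
      (IsSelfAdjoint.algebraMap A (IsSelfAdjoint.all a))
  rw [algebraMap_le_iff_le_spectrum] at hlow
  rw [le_algebraMap_iff_spectrum_le] at hup
  have hcfc := (cfc_le_iff (fun x : ℝ => (x - 1) ^ 2)
    (fun x => max (1 - b⁻¹) (a⁻¹ - 1) ^ 2 * x ^ 2) M).2
    fun x hx => sub_one_sq_le_max_sq_mul_sq ha (hlow x hx) (hup x hx)
  rwa [cfc_pow (fun x : ℝ => x - 1) 2 M, cfc_sub (fun x : ℝ => x) (fun _ => 1), cfc_id' ℝ M,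
    cfc_const_one ℝ M, cfc_const_mul _ (fun x : ℝ => x ^ 2) M, cfc_pow_id M 2] at hcfc

end FunctionalCalculus

section Loewner

variable {𝕜 n : Type*} [RCLike 𝕜] [Fintype n] [DecidableEq n]

theorem sub_mul_inv_mul_sub_le_max_sq_smul {J G : Matrix n n 𝕜} {a b : ℝ} (hJ : J.PosDef)
    (ha : 0 < a) (hlow : a • J ≤ G) (hup : G ≤ b • J) :
    (G - J) * J⁻¹ * (G - J) ≤ max (1 - b⁻¹) (a⁻¹ - 1) ^ 2 • (G * J⁻¹ * G) := by
  set R := CFC.sqrt J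
  have hR : IsSelfAdjoint R := .of_nonneg (CFC.sqrt_nonneg J)
  have hRR : R * R = J := CFC.sqrt_mul_sqrt_self J (nonneg_iff_posSemidef.2 hJ.posSemidef)
  have hRdet : IsUnit R.det :=
    isUnit_of_mul_isUnit_left (by rw [← det_mul, hRR]; exact (isUnit_iff_isUnit_det J).1 hJ.isUnit)
  have hRRi : R * R⁻¹ = 1 := mul_nonsing_inv R hRdet
  have hRiR : R⁻¹ * R = 1 := nonsing_inv_mul R hRdet
  obtain ⟨M, hM⟩ : ∃ M, M = R⁻¹ * G * R⁻¹ := ⟨_, rfl⟩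
  have hGRi : G * R⁻¹ = R * M := by simp only [hM, ← Matrix.mul_assoc, hRRi, Matrix.one_mul]
  have hRiG : R⁻¹ * G = M * R := by simp only [hM, Matrix.mul_assoc, hRiR, Matrix.mul_one]
  have hJRi : J * R⁻¹ = R := by rw [← hRR, Matrix.mul_assoc, hRRi, Matrix.mul_one]
  have hRiJ : R⁻¹ * J = R := by rw [← hRR, ← Matrix.mul_assoc, hRiR, Matrix.one_mul]
  have hconj (c : ℝ) : R⁻¹ * (c • J) * R⁻¹ = algebraMap ℝ (Matrix n n 𝕜) c := by
    rw [Algebra.algebraMap_eq_smul_one, Matrix.mul_smul, Matrix.smul_mul, hRiJ, hRRi]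
  have hRi : IsSelfAdjoint R⁻¹ := IsHermitian.inv hR
  have hMlow := hRi.conjugate_le_conjugate hlow
  have hMup := hRi.conjugate_le_conjugate hup
  rw [← hM, hconj] at hMlow hMup
  have key := hR.conjugate_le_conjugate (sub_one_sq_le_max_sq_smul_sq ha hMlow hMup)
  have hJinv : J⁻¹ = R⁻¹ * R⁻¹ := by rw [← hRR, Matrix.mul_inv_rev]
  convert key using 1
  · calc (G - J) * J⁻¹ * (G - J) = ((G - J) * R⁻¹) * (R⁻¹ * (G - J)) := by
          rw [hJinv]; simp only [Matrix.mul_assoc]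
      _ = R * (M - 1) ^ 2 * R := by
          rw [Matrix.sub_mul, Matrix.mul_sub, hGRi, hRiG, hJRi, hRiJ]; noncomm_ring
  · calc _ = max (1 - b⁻¹) (a⁻¹ - 1) ^ 2 • ((G * R⁻¹) * (R⁻¹ * G)) := by
          rw [hJinv]; simp only [Matrix.mul_assoc]
      _ = _ := by
          rw [hGRi, hRiG, Matrix.mul_smul, Matrix.smul_mul, sq M]; simp only [Matrix.mul_assoc]

end Loewner

theorem theta_le_of_le_sq_smul {n : ℕ} {J G : Matrix (Fin n) (Fin n) ℝ} {c : ℝ}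
    (hJ : J.PosSemidef) (hG : G.IsHermitian) (hc : 0 ≤ c)
    (h : (G - J) * J⁻¹ * (G - J) ≤ c ^ 2 • (G * J⁻¹ * G)) (u : Fin n → ℝ) :
    theta J G u ≤ c := by
  unfold theta
  split_ifs
  · exact hc
  have hden := (hG.eq ▸ hJ.inv.conjTranspose_mul_mul_same G).dotProduct_mulVec_nonneg u
  have hgap := (le_iff.1 h).dotProduct_mulVec_nonneg u
  simp only [star_trivial, sub_mulVec, smul_mulVec, dotProduct_sub, dotProduct_smul,
    smul_eq_mul, sub_nonneg] at hden hgap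
  exact Real.sqrt_le_iff.2 ⟨hc, div_le_of_le_mul₀ hden (sq_nonneg c) hgap⟩

theorem theta_le_rho_general {n : ℕ} (J G : Matrix (Fin n) (Fin n) ℝ)
    (hJ : J.PosDef) (hG : G.PosDef) (ξ' μ L : ℝ) (hξ : 1 ≤ ξ')
    (hlow : (G - ξ'⁻¹ • J).PosSemidef) (hup : ((ξ' * (L / μ)) • J - G).PosSemidef) :
    ∀ u : Fin n → ℝ, theta J G u ≤ max (1 - μ / (ξ' * L)) (ξ' - 1) := by
  have key := sub_mul_inv_mul_sub_le_max_sq_smul hJ (inv_pos.2 (zero_lt_one.trans_le hξ))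
    (le_iff.2 hlow) (le_iff.2 hup)
  have hinv : (ξ' * (L / μ))⁻¹ = μ / (ξ' * L) := by rw [mul_inv, inv_div]; ring
  rw [hinv, inv_inv] at key
  exact theta_le_of_le_sq_smul hJ.posSemidef hG.isHermitian (le_max_of_le_right (by linarith)) key

theorem theta_le_rho {n : ℕ} (J G : Matrix (Fin n) (Fin n) ℝ)
    (hJ : J.PosDef) (hG : G.PosDef) (ξ' μ L : ℝ) (hξ : 1 ≤ ξ')
    (hμ : 0 < μ) (hμL : μ ≤ L)
    (hlow : (G - ξ'⁻¹ • J).PosSemidef) (hup : ((ξ' * (L / μ)) • J - G).PosSemidef) :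
    ∀ u : Fin n → ℝ, theta J G u ≤ max (1 - μ / (ξ' * L)) (ξ' - 1) :=
  theta_le_rho_general J G hJ hG ξ' μ L hξ hlow hup
end

section
/- If G, A are symmetric positive definite with (1/ξ)A ⪯ G ⪯ ηA (ξ, η ≥ 1) and u ≠ 0, then for α₁ = uᵀGu/(uᵀAu) and β₁ = uᵀAu/(uᵀAG⁻¹Au), one has α₁β₁ - 2β₁ + 1 = uᵀ(G-A)G⁻¹(G-A)u/(uᵀAG⁻¹Au) ≥ θ(A,G,u)²/(ξ³η), where θ(A,G,u) = [uᵀ(G-A)A⁻¹(G-A)u/(uᵀGA⁻¹Gu)]^{1/2}. -/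
open Matrix

/-! The identity is the expansion `(G - A) G⁻¹ (G - A) = G - 2A + A G⁻¹ A`. For the bound, inverting
`G ⪯ ηA` in the Loewner order and conjugating by `G - A` compares the numerators,
`(G - A) A⁻¹ (G - A) ⪯ η (G - A) G⁻¹ (G - A)`, while `ξ⁻¹A ⪯ G` and its inverted form
`G⁻¹ ⪯ ξA⁻¹` give `A G⁻¹ A ⪯ ξA ⪯ ξ²G ⪯ ξ³ G A⁻¹ G` for the denominators. -/

open scoped MatrixOrder ComplexOrder

namespace Matrix

section RCLike

variable {n 𝕜 : Type*} [Fintype n] [RCLike 𝕜]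

theorem PosSemidef.conjugate {B M : Matrix n n 𝕜} (hM : M.PosSemidef) (hB : B.IsHermitian) :
    (B * M * B).PosSemidef := by
  simpa [hB.eq] using hM.mul_mul_conjTranspose_same B

variable [DecidableEq n]

theorem PosDef.conjugate {B M : Matrix n n 𝕜} (hM : M.PosDef) (hB : B.PosDef) :
    (B * M * B).PosDef := by
  simpa [star_eq_conjTranspose, hB.1.eq] using
    (Matrix.IsUnit.posDef_star_left_conjugate_iff hB.isUnit).mpr hM

/-- Both Schur complements of the block matrix `[[Y, 1], [1, X⁻¹]]` express its positivity,
one as `X ≤ Y`, the other as `Y⁻¹ ≤ X⁻¹`. -/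
theorem PosDef.inv_le_inv {X Y : Matrix n n 𝕜} (hX : X.PosDef) (hXY : X ≤ Y) : Y⁻¹ ≤ X⁻¹ := by
  have hY : Y.PosDef := by simpa using hX.add_posSemidef hXY
  have := hY.isUnit.invertible
  have := hX.inv.isUnit.invertible
  have hblock : (fromBlocks Y 1 1ᴴ X⁻¹).PosSemidef := by
    rw [PosDef.fromBlocks₂₂ _ _ hX.inv]
    simpa [nonsing_inv_nonsing_inv _ (X.isUnit_iff_isUnit_det.mp hX.isUnit)] using le_iff.mp hXY
  exact le_iff.mpr <| by simpa using (PosDef.fromBlocks₁₁ _ _ hY).mp hblock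

theorem PosDef.inv_le_smul_inv {X Y : Matrix n n 𝕜} (hX : X.PosDef) {c : ℝ} (hc : 0 < c)
    (h : X ≤ c • Y) : Y⁻¹ ≤ c • X⁻¹ := by
  have h' : c⁻¹ • X ≤ Y := by
    simpa [smul_smul, inv_mul_cancel₀ hc.ne'] using
      smul_le_smul_of_nonneg_left h (inv_nonneg.2 hc.le)
  have hinv : (c⁻¹ • X)⁻¹ = c • X⁻¹ := inv_eq_left_inv <| by
    rw [smul_mul_smul_comm, mul_inv_cancel₀ hc.ne',
      nonsing_inv_mul _ (X.isUnit_iff_isUnit_det.mp hX.isUnit), one_smul]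
  simpa [hinv] using PosDef.inv_le_inv (hX.smul (inv_pos.2 hc)) h'

theorem PosDef.conjugate_inv_le_smul {B X Y : Matrix n n 𝕜} (hX : X.PosDef) (hB : B.IsHermitian)
    {c : ℝ} (hc : 0 < c) (h : X ≤ c • Y) : B * Y⁻¹ * B ≤ c • (B * X⁻¹ * B) := by
  rw [← smul_mul_assoc, ← mul_smul_comm]
  exact IsSelfAdjoint.conjugate_le_conjugate (hX.inv_le_smul_inv hc h) hB

theorem PosDef.mul_inv_mul_le_pow_three_smul {A G : Matrix n n 𝕜} (hA : A.PosDef)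
    (hG : G.PosDef) {ξ : ℝ} (hξ : 0 < ξ) (h : ξ⁻¹ • A ≤ G) :
    A * G⁻¹ * A ≤ ξ ^ 3 • (G * A⁻¹ * G) := by
  have hAG : A ≤ ξ • G := by
    simpa [smul_smul, mul_inv_cancel₀ hξ.ne'] using smul_le_smul_of_nonneg_left h hξ.le
  have hAdet := A.isUnit_iff_isUnit_det.mp hA.isUnit
  have hGdet := G.isUnit_iff_isUnit_det.mp hG.isUnit
  calc A * G⁻¹ * A ≤ ξ • (A * A⁻¹ * A) := hA.conjugate_inv_le_smul hA.1 hξ hAG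
    _ = ξ • A := by rw [mul_nonsing_inv _ hAdet, one_mul]
    _ ≤ ξ • (ξ • G) := smul_le_smul_of_nonneg_left hAG hξ.le
    _ = ξ ^ 2 • (G * G⁻¹ * G) := by rw [mul_nonsing_inv _ hGdet, one_mul, smul_smul, sq]
    _ ≤ ξ ^ 2 • (ξ • (G * A⁻¹ * G)) :=
        smul_le_smul_of_nonneg_left (hA.conjugate_inv_le_smul hG.1 hξ hAG) (by positivity)
    _ = ξ ^ 3 • (G * A⁻¹ * G) := by rw [smul_smul, ← pow_succ]

end RCLike

variable {n : Type*} [Fintype n]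

theorem sub_mul_nonsing_inv_mul_sub [DecidableEq n] {α : Type*} [CommRing α]
    {A G : Matrix n n α} (hG : IsUnit G.det) :
    (G - A) * G⁻¹ * (G - A) = G - 2 • A + A * G⁻¹ * A := by
  simp only [sub_mul, mul_sub, mul_nonsing_inv _ hG, one_mul, nonsing_inv_mul_cancel_right _ _ hG]
  abel

theorem dotProduct_mulVec_le_of_le {M N : Matrix n n ℝ} (h : M ≤ N) (u : n → ℝ) :
    u ⬝ᵥ M *ᵥ u ≤ u ⬝ᵥ N *ᵥ u := by
  have := (le_iff.mp h).dotProduct_mulVec_nonneg u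
  rw [star_trivial, sub_mulVec, dotProduct_sub] at this
  linarith

end Matrix

theorem div_div_mul_le_div {a b c d k l : ℝ} (hc : 0 ≤ c) (hd : 0 < d) (hl : 0 < l)
    (hac : a ≤ l * c) (hdb : d ≤ k * b) : a / b / (k * l) ≤ c / d :=
  calc a / b / (k * l) = a / (l * (k * b)) := by ring
    _ ≤ l * c / (l * d) := div_le_div₀ (by positivity) hac (by positivity) (by gcongr)
    _ = c / d := mul_div_mul_left _ _ hl.ne'

theorem alpha_beta_lower_bound {n : ℕ} (A G : Matrix (Fin n) (Fin n) ℝ)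
    (hA : A.PosDef) (hG : G.PosDef) (ξ η : ℝ) (hξ : 1 ≤ ξ) (hη : 1 ≤ η)
    (hlow : (G - ξ⁻¹ • A).PosSemidef) (hup : (η • A - G).PosSemidef)
    (u : Fin n → ℝ) (hu : u ≠ 0) :
    let α₁ := (u ⬝ᵥ G.mulVec u) / (u ⬝ᵥ A.mulVec u)
    let β₁ := (u ⬝ᵥ A.mulVec u) / (u ⬝ᵥ (A * G⁻¹ * A).mulVec u)
    α₁ * β₁ - 2 * β₁ + 1 =
        (u ⬝ᵥ ((G - A) * G⁻¹ * (G - A)).mulVec u) / (u ⬝ᵥ (A * G⁻¹ * A).mulVec u) ∧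
      (u ⬝ᵥ ((G - A) * G⁻¹ * (G - A)).mulVec u) / (u ⬝ᵥ (A * G⁻¹ * A).mulVec u) ≥
        theta A G u ^ 2 / (ξ ^ 3 * η) := by
  intro α₁ β₁
  have hξ0 : 0 < ξ := by linarith
  have hη0 : 0 < η := by linarith
  have hGA : (G - A).IsHermitian := hG.1.sub hA.1
  have hT : 0 < u ⬝ᵥ A *ᵥ u := by simpa using hA.dotProduct_mulVec_pos hu
  have hD : 0 < u ⬝ᵥ (A * G⁻¹ * A) *ᵥ u := by
    simpa using (hG.inv.conjugate hA).dotProduct_mulVec_pos hu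
  have hD' : 0 < u ⬝ᵥ (G * A⁻¹ * G) *ᵥ u := by
    simpa using (hA.inv.conjugate hG).dotProduct_mulVec_pos hu
  have hN : 0 ≤ u ⬝ᵥ ((G - A) * G⁻¹ * (G - A)) *ᵥ u := by
    simpa using (hG.inv.posSemidef.conjugate hGA).dotProduct_mulVec_nonneg u
  have hN' : 0 ≤ u ⬝ᵥ ((G - A) * A⁻¹ * (G - A)) *ᵥ u := by
    simpa using (hA.inv.posSemidef.conjugate hGA).dotProduct_mulVec_nonneg u
  have hnum := dotProduct_mulVec_le_of_le (hG.conjugate_inv_le_smul hGA hη0 (le_iff.mpr hup)) u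
  have hden := dotProduct_mulVec_le_of_le
    (hA.mul_inv_mul_le_pow_three_smul hG hξ0 (le_iff.mpr hlow)) u
  simp only [smul_mulVec, dotProduct_smul, smul_eq_mul] at hnum hden
  refine ⟨?_, ?_⟩
  · rw [sub_mul_nonsing_inv_mul_sub (G.isUnit_iff_isUnit_det.mp hG.isUnit)]
    simp only [α₁, β₁, add_mulVec, sub_mulVec, smul_mulVec, dotProduct_add, dotProduct_sub,
      dotProduct_smul]
    field_simp
    ring
  · rw [theta, if_neg hu, Real.sq_sqrt (div_nonneg hN' hD'.le)]
    exact div_div_mul_le_div hN hD hη0 hnum hden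
end
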